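/- arXiv:2603.14985 — 3 statements merged into one kernel-verified Lean document; each statement's English description precedes it below -/
import Mathlib

section
/- The function x ↦ 5·W(x)⁴·ΛW(x) is (absolutely) integrable on ℝ³ and ∫_{ℝ³} 5·W(x)⁴·ΛW(x) dx = −2π. -/
open MeasureTheory Real Filter

noncomputable section

/-- ℝ³ as a Euclidean space. -/
abbrev E3 := EuclideanSpace ℝ (Fin 3)

/-- The ground state soliton `W(x) = √3 (1 + 3|x|²)^(-1/2)`. -/
def W (x : E3) : ℝ := Real.sqrt 3 * (1 + 3 * ‖x‖ ^ 2) ^ (-(1 / 2) : ℝ)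

/-- The scaling derivative `ΛW(x) = (1/2) W(x) + x · ∇W(x)`. -/
def LamW (x : E3) : ℝ := (1 / 2) * W x + (inner ℝ x (gradient W x) : ℝ)

/-!
Both `W⁴` and `ΛW` are explicit radial functions, and `5 W⁴ ΛW` has the radial profile
`f(r) = (45√3/2) (1 - 3r²) (1 + 3r²)^(-7/2)`, which is `O(r⁻⁵)` and hence integrable on ℝ³.
In polar coordinates the integral is `4π ∫₀^∞ r² f(r) dr`, and `r² f(r)` has the elementary
primitive `(45√3/2) (r³/3 - r⁵/5) (1 + 3r²)^(-5/2)`, which vanishes at `0` and tends to `-1/2`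
at infinity.
-/

open Module Topology

theorem hasGradientAt_one_add_mul_norm_sq_rpow {F : Type*} [NormedAddCommGroup F]
    [InnerProductSpace ℝ F] [CompleteSpace F] {c p : ℝ} {x : F} (hx : 1 + c * ‖x‖ ^ 2 ≠ 0) :
    HasGradientAt (fun y => (1 + c * ‖y‖ ^ 2) ^ p)
      ((2 * c * p * (1 + c * ‖x‖ ^ 2) ^ (p - 1)) • x) x := by
  have hbase : HasFDerivAt (fun y : F => 1 + c * ‖y‖ ^ 2) ((2 * c) • innerSL ℝ x) x :=
    (((hasFDerivAt_id x).norm_sq.const_mul c).const_add 1).congr_fderiv (by ext; simp; ring)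
  rw [hasGradientAt_iff_hasFDerivAt]
  refine ((hasDerivAt_rpow_const (Or.inl hx)).comp_hasFDerivAt x hbase).congr_fderiv ?_
  ext y
  simp
  ring

theorem gradient_W (x : E3) :
    gradient W x = (-3 * √3 * (1 + 3 * ‖x‖ ^ 2) ^ (-(3 / 2) : ℝ)) • x := by
  have h := hasGradientAt_one_add_mul_norm_sq_rpow (c := 3) (p := -(1 / 2)) (x := x)
    (by positivity)
  rw [hasGradientAt_iff_hasFDerivAt] at h
  refine (hasGradientAt_iff_hasFDerivAt.2 ((h.const_mul √3).congr_fderiv ?_)).gradient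
  ext y
  simp
  norm_num
  ring

theorem LamW_eq (x : E3) :
    LamW x = √3 / 2 * (1 - 3 * ‖x‖ ^ 2) * (1 + 3 * ‖x‖ ^ 2) ^ (-(3 / 2) : ℝ) := by
  have ht : 0 < 1 + 3 * ‖x‖ ^ 2 := by positivity
  have hsplit : (1 + 3 * ‖x‖ ^ 2) ^ (-(1 / 2) : ℝ)
      = (1 + 3 * ‖x‖ ^ 2) * (1 + 3 * ‖x‖ ^ 2) ^ (-(3 / 2) : ℝ) := by
    rw [← rpow_one_add' ht.le (by norm_num)]; norm_num
  rw [LamW, gradient_W, real_inner_smul_right, real_inner_self_eq_norm_sq, W, hsplit]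
  ring

theorem W_pow_four (x : E3) : W x ^ 4 = 9 * (1 + 3 * ‖x‖ ^ 2) ^ (-2 : ℝ) := by
  have hsqrt : √3 ^ 4 = 9 := by
    rw [show 4 = 2 * 2 by rfl, pow_mul, sq_sqrt (by norm_num)]; norm_num
  rw [W, mul_pow, hsqrt, ← rpow_mul_natCast (by positivity)]
  norm_num

def radialW4LamW (r : ℝ) : ℝ := 45 * √3 / 2 * (1 - 3 * r ^ 2) * (1 + 3 * r ^ 2) ^ (-(7 / 2) : ℝ)

theorem five_mul_W_pow_four_mul_LamW (x : E3) : 5 * W x ^ 4 * LamW x = radialW4LamW ‖x‖ := by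
  have hexp : (1 + 3 * ‖x‖ ^ 2) ^ (-2 : ℝ) * (1 + 3 * ‖x‖ ^ 2) ^ (-(3 / 2) : ℝ)
      = (1 + 3 * ‖x‖ ^ 2) ^ (-(7 / 2) : ℝ) := by
    rw [← rpow_add (by positivity)]; norm_num
  rw [W_pow_four, LamW_eq, radialW4LamW, ← hexp]
  ring

theorem continuous_radialW4LamW : Continuous radialW4LamW := by
  unfold radialW4LamW
  exact (by fun_prop : Continuous fun r : ℝ => 45 * √3 / 2 * (1 - 3 * r ^ 2)).mul
    ((by fun_prop : Continuous fun r : ℝ => 1 + 3 * r ^ 2).rpow_const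
      fun r => Or.inl (by positivity))

theorem abs_radialW4LamW_le (r : ℝ) :
    |radialW4LamW r| ≤ 45 * √3 / 2 * (1 + r ^ 2) ^ (-5 / 2 : ℝ) := by
  have ht : 0 < 1 + 3 * r ^ 2 := by positivity
  have habs : |1 - 3 * r ^ 2| ≤ 1 + 3 * r ^ 2 := abs_le.2 ⟨by nlinarith, by nlinarith⟩
  have hexp : (1 + 3 * r ^ 2) * (1 + 3 * r ^ 2) ^ (-(7 / 2) : ℝ)
      = (1 + 3 * r ^ 2) ^ (-5 / 2 : ℝ) := by
    rw [← rpow_one_add' ht.le (by norm_num)]; norm_num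
  calc |radialW4LamW r|
        = 45 * √3 / 2 * |1 - 3 * r ^ 2| * (1 + 3 * r ^ 2) ^ (-(7 / 2) : ℝ) := by
        rw [radialW4LamW, abs_mul, abs_mul, abs_of_pos (by positivity),
          abs_of_pos (rpow_pos_of_pos ht _)]
    _ ≤ 45 * √3 / 2 * (1 + 3 * r ^ 2) * (1 + 3 * r ^ 2) ^ (-(7 / 2) : ℝ) := by gcongr
    _ = 45 * √3 / 2 * (1 + 3 * r ^ 2) ^ (-5 / 2 : ℝ) := by rw [mul_assoc, hexp]
    _ ≤ 45 * √3 / 2 * (1 + r ^ 2) ^ (-5 / 2 : ℝ) :=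
        mul_le_mul_of_nonneg_left
          (rpow_le_rpow_of_nonpos (by positivity) (by nlinarith) (by norm_num)) (by positivity)

theorem integrable_radialW4LamW_norm {E : Type*} [NormedAddCommGroup E] [NormedSpace ℝ E]
    [FiniteDimensional ℝ E] [MeasurableSpace E] [BorelSpace E] (μ : Measure E)
    [μ.IsAddHaarMeasure] (hE : finrank ℝ E < 5) :
    Integrable (fun x => radialW4LamW ‖x‖) μ :=
  ((integrable_rpow_neg_one_add_norm_sq (μ := μ) (r := 5) (by exact_mod_cast hE)).const_mul
      _).mono'
    (continuous_radialW4LamW.comp continuous_norm).aestronglyMeasurable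
    (ae_of_all _ fun x => abs_radialW4LamW_le ‖x‖)

def primitiveSqMulRadialW4LamW (r : ℝ) : ℝ :=
  45 * √3 / 2 * ((r ^ 3 / 3 - r ^ 5 / 5) * (1 + 3 * r ^ 2) ^ (-(5 / 2) : ℝ))

theorem hasDerivAt_primitiveSqMulRadialW4LamW (r : ℝ) :
    HasDerivAt primitiveSqMulRadialW4LamW (r ^ 2 * radialW4LamW r) r := by
  have ht : 0 < 1 + 3 * r ^ 2 := by positivity
  have hbase : HasDerivAt (fun r : ℝ => 1 + 3 * r ^ 2) (6 * r) r :=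
    (((hasDerivAt_pow 2 r).const_mul 3).const_add 1).congr_deriv (by norm_num; ring)
  have hpoly : HasDerivAt (fun r : ℝ => r ^ 3 / 3 - r ^ 5 / 5) (r ^ 2 - r ^ 4) r :=
    (((hasDerivAt_pow 3 r).div_const 3).sub ((hasDerivAt_pow 5 r).div_const 5)).congr_deriv
      (by norm_num)
  have hexp : (1 + 3 * r ^ 2) ^ (-(5 / 2) : ℝ)
      = (1 + 3 * r ^ 2) * (1 + 3 * r ^ 2) ^ (-(7 / 2) : ℝ) := by
    rw [← rpow_one_add' ht.le (by norm_num)]; norm_num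
  refine ((hpoly.mul ((hasDerivAt_rpow_const (Or.inl ht.ne')).comp r hbase)).const_mul
    (45 * √3 / 2)).congr_deriv ?_
  rw [Function.comp_apply, radialW4LamW, hexp, show (-(5 / 2) - 1 : ℝ) = -(7 / 2) by norm_num]
  ring

theorem primitiveSqMulRadialW4LamW_eq_of_pos {r : ℝ} (hr : 0 < r) :
    primitiveSqMulRadialW4LamW r
      = 45 * √3 / 2 * (((r ^ 2)⁻¹ / 3 - 1 / 5) * ((r ^ 2)⁻¹ + 3) ^ (-(5 / 2) : ℝ)) := by
  have hfactor : 1 + 3 * r ^ 2 = r ^ 2 * ((r ^ 2)⁻¹ + 3) := by field_simp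
  have hpow : (r ^ 2) ^ (-(5 / 2) : ℝ) = (r ^ 5)⁻¹ := by
    rw [← rpow_natCast r 2, ← rpow_mul hr.le, ← rpow_natCast r 5, ← rpow_neg hr.le]; norm_num
  rw [primitiveSqMulRadialW4LamW, hfactor, mul_rpow (by positivity) (by positivity), hpow]
  field_simp

theorem sqrt_three_mul_three_rpow : √3 * (3 : ℝ) ^ (-(5 / 2) : ℝ) = 1 / 9 := by
  rw [sqrt_eq_rpow, ← rpow_add (by norm_num)]
  norm_num

-- In the variable `s = r⁻²` the primitive is continuous at `s = 0`.
theorem tendsto_primitiveSqMulRadialW4LamW_atTop :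
    Tendsto primitiveSqMulRadialW4LamW atTop (𝓝 (-1 / 2)) := by
  have hcont : ContinuousAt
      (fun s : ℝ => 45 * √3 / 2 * ((s / 3 - 1 / 5) * (s + 3) ^ (-(5 / 2) : ℝ))) 0 := by
    fun_prop (disch := norm_num)
  have hlim : Tendsto (fun s : ℝ => 45 * √3 / 2 * ((s / 3 - 1 / 5) * (s + 3) ^ (-(5 / 2) : ℝ)))
      (𝓝 0) (𝓝 (-1 / 2)) := by
    convert hcont.tendsto using 2
    rw [zero_div, zero_add]
    linear_combination (9 / 2 : ℝ) * sqrt_three_mul_three_rpow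
  refine (hlim.comp (tendsto_inv_atTop_zero.comp (tendsto_pow_atTop two_ne_zero))).congr' ?_
  filter_upwards [eventually_gt_atTop 0] with r hr
  exact (primitiveSqMulRadialW4LamW_eq_of_pos hr).symm

theorem integral_Ioi_sq_mul_radialW4LamW : ∫ r in Set.Ioi 0, r ^ 2 * radialW4LamW r = -1 / 2 := by
  have hint : IntegrableOn (fun r => r ^ 2 * radialW4LamW r) (Set.Ioi 0) := by
    simpa using (integrable_fun_norm_addHaar (volume : Measure E3)).1
      (integrable_radialW4LamW_norm volume (by simp))
  rw [integral_Ioi_of_hasDerivAt_of_tendsto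
    (hasDerivAt_primitiveSqMulRadialW4LamW 0).continuousAt.continuousWithinAt
    (fun r _ => hasDerivAt_primitiveSqMulRadialW4LamW r) hint
    tendsto_primitiveSqMulRadialW4LamW_atTop]
  simp [primitiveSqMulRadialW4LamW]

theorem integral_fun_norm_euclideanSpace_fin_three (f : ℝ → ℝ) :
    ∫ x : EuclideanSpace ℝ (Fin 3), f ‖x‖ = 4 * π * ∫ r in Set.Ioi 0, r ^ 2 * f r := by
  rw [integral_fun_norm_addHaar volume f, finrank_euclideanSpace_fin, measureReal_def,
    EuclideanSpace.volume_ball_fin_three]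
  simp only [nsmul_eq_mul, smul_eq_mul, ENNReal.toReal_mul, ENNReal.toReal_pow,
    ENNReal.toReal_ofReal zero_le_one, ENNReal.toReal_ofReal (by positivity : 0 ≤ π * 4 / 3)]
  push_cast
  ring

/-- `5 W⁴ ΛW` is integrable on ℝ³ with integral `-2π`. -/
theorem stmt7 :
    Integrable (fun x : E3 => 5 * W x ^ 4 * LamW x) ∧
    ∫ x : E3, 5 * W x ^ 4 * LamW x = -(2 * Real.pi) := by
  simp only [five_mul_W_pow_four_mul_LamW]
  refine ⟨integrable_radialW4LamW_norm volume (by simp), ?_⟩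
  rw [integral_fun_norm_euclideanSpace_fin_three, integral_Ioi_sq_mul_radialW4LamW]
  ring

end
end

section
/- The Dirichlet energy of the ground state soliton equals ∫_{ℝ³} |∇W(x)|² dx = 3√3·π²/4. -/
/-!
`|∇W(x)|² = 27|x|²/(1 + 3|x|²)³` depends only on `r = |x|`, so polar coordinates turn the energy
into `4π ∫₀^∞ r² · 27r²/(1 + 3r²)³ dr`. The substitution `t = √3 r` reduces this to
`4π √3 ∫₀^∞ t⁴/(1 + t²)³ dt`, and the last integral is `3π/16` by an explicit primitive built
from `arctan`.
-/

open MeasureTheory Real Filter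

noncomputable section

open Set Topology

theorem HasDerivAt.hasGradientAt_comp_norm_sq {F : Type*} [NormedAddCommGroup F]
    [InnerProductSpace ℝ F] [CompleteSpace F] {φ : ℝ → ℝ} {φ' : ℝ} {x : F}
    (hφ : HasDerivAt φ φ' (‖x‖ ^ 2)) :
    HasGradientAt (fun y => φ (‖y‖ ^ 2)) ((2 * φ') • x) x := by
  rw [hasGradientAt_iff_hasFDerivAt]
  refine (hφ.comp_hasFDerivAt x (hasFDerivAt_id x).norm_sq).congr_fderiv ?_
  ext y
  simp only [id_eq, ContinuousLinearMap.comp_id, smul_apply, coe_innerSL_apply, nsmul_eq_mul,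
    Nat.cast_ofNat, smul_eq_mul, map_smul, InnerProductSpace.toDual_apply_apply]
  ring

lemma hasDerivAt_solitonProfile {t : ℝ} (ht : 0 < 1 + 3 * t) :
    HasDerivAt (fun t : ℝ => √3 * (1 + 3 * t) ^ (-(1 / 2) : ℝ))
      (-(3 * √3 / 2) * (1 + 3 * t) ^ (-(3 / 2) : ℝ)) t := by
  refine ((((hasDerivAt_id t).const_mul 3).const_add 1).rpow_const
    (p := -(1 / 2)) (Or.inl ht.ne')).const_mul √3 |>.congr_deriv ?_
  rw [show (-(1 / 2) - 1 : ℝ) = -(3 / 2) by norm_num, id]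
  ring

lemma hasGradientAt_W (x : E3) :
    HasGradientAt W ((-(3 * √3) * (1 + 3 * ‖x‖ ^ 2) ^ (-(3 / 2) : ℝ)) • x) x := by
  have h : HasGradientAt W _ x :=
    (hasDerivAt_solitonProfile (t := ‖x‖ ^ 2) (by positivity)).hasGradientAt_comp_norm_sq
  convert h using 2
  ring

def radialDirichletDensity (r : ℝ) : ℝ := 27 * r ^ 2 / (1 + 3 * r ^ 2) ^ 3

lemma norm_gradient_W_sq (x : E3) : ‖gradient W x‖ ^ 2 = radialDirichletDensity ‖x‖ := by
  have hpos : 0 < 1 + 3 * ‖x‖ ^ 2 := by positivity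
  have hpow : ((1 + 3 * ‖x‖ ^ 2) ^ (-(3 / 2) : ℝ)) ^ 2 = ((1 + 3 * ‖x‖ ^ 2) ^ 3)⁻¹ := by
    rw [← rpow_mul_natCast hpos.le]
    norm_num
  rw [(hasGradientAt_W x).gradient, norm_smul, mul_pow, norm_eq_abs, sq_abs, mul_pow, hpow,
    neg_sq, mul_pow, sq_sqrt (by norm_num), radialDirichletDensity]
  field_simp
  ring

def quarticPrimitive (t : ℝ) : ℝ :=
  3 / 8 * arctan t - 5 / 8 * (t / (1 + t ^ 2)) + 1 / 4 * (t / (1 + t ^ 2) ^ 2)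

lemma hasDerivAt_quarticPrimitive (t : ℝ) :
    HasDerivAt quarticPrimitive (t ^ 4 / (1 + t ^ 2) ^ 3) t := by
  have hpos : 0 < 1 + t ^ 2 := by positivity
  have hden : HasDerivAt (fun t : ℝ => 1 + t ^ 2) (2 * t) t := by
    simpa using (hasDerivAt_pow 2 t).const_add 1
  refine (((hasDerivAt_arctan t).const_mul (3 / 8)).sub
    (((hasDerivAt_id' t).fun_div hden hpos.ne').const_mul (5 / 8))).add
    (((hasDerivAt_id' t).fun_div (hden.fun_pow 2) (pow_ne_zero 2 hpos.ne')).const_mul (1 / 4))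
    |>.congr_deriv ?_
  field_simp
  ring

lemma tendsto_div_one_add_sq_pow_atTop {k : ℕ} (hk : k ≠ 0) :
    Tendsto (fun t : ℝ => t / (1 + t ^ 2) ^ k) atTop (𝓝 0) := by
  refine tendsto_of_tendsto_of_tendsto_of_le_of_le' tendsto_const_nhds tendsto_inv_atTop_zero
    ?_ ?_
  · filter_upwards [eventually_ge_atTop 0] with t ht
    positivity
  · filter_upwards [eventually_gt_atTop 0] with t ht
    rw [div_le_iff₀ (by positivity), inv_mul_eq_div, le_div_iff₀ ht, ← sq]
    calc t ^ 2 ≤ 1 + t ^ 2 := by linarith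
      _ ≤ (1 + t ^ 2) ^ k := le_self_pow₀ (by nlinarith) hk

lemma tendsto_quarticPrimitive_atTop :
    Tendsto quarticPrimitive atTop (𝓝 (3 * π / 16)) := by
  have h := (((tendsto_arctan_atTop.mono_right nhdsWithin_le_nhds).const_mul (3 / 8)).sub
    ((tendsto_div_one_add_sq_pow_atTop one_ne_zero).const_mul (5 / 8))).add
    ((tendsto_div_one_add_sq_pow_atTop two_ne_zero).const_mul (1 / 4))
  convert h using 2
  · simp [quarticPrimitive]
  · ring

lemma integrableOn_Ioi_pow_four_div_one_add_sq_pow_three :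
    IntegrableOn (fun t : ℝ => t ^ 4 / (1 + t ^ 2) ^ 3) (Ioi 0) :=
  integrableOn_Ioi_deriv_of_nonneg' (fun t _ => hasDerivAt_quarticPrimitive t)
    (fun t _ => by positivity) tendsto_quarticPrimitive_atTop

lemma integral_Ioi_pow_four_div_one_add_sq_pow_three :
    ∫ t in Ioi (0 : ℝ), t ^ 4 / (1 + t ^ 2) ^ 3 = 3 * π / 16 := by
  rw [integral_Ioi_of_hasDerivAt_of_nonneg' (fun t _ => hasDerivAt_quarticPrimitive t)
    (fun t _ => by positivity) tendsto_quarticPrimitive_atTop]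
  simp [quarticPrimitive]

lemma sq_mul_radialDirichletDensity (r : ℝ) :
    r ^ 2 * radialDirichletDensity r = 3 * ((√3 * r) ^ 4 / (1 + (√3 * r) ^ 2) ^ 3) := by
  have h3 : √3 ^ 2 = 3 := sq_sqrt (by norm_num)
  have h9 : √3 ^ 4 = 9 := by rw [show (4 : ℕ) = 2 * 2 from rfl, pow_mul, h3]; norm_num
  simp only [radialDirichletDensity, mul_pow, h3, h9]
  ring

lemma integrableOn_Ioi_sq_mul_radialDirichletDensity :
    IntegrableOn (fun r : ℝ => r ^ 2 * radialDirichletDensity r) (Ioi 0) := by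
  simp_rw [sq_mul_radialDirichletDensity]
  have h := (integrableOn_Ioi_comp_mul_left_iff (fun t : ℝ => t ^ 4 / (1 + t ^ 2) ^ 3) 0
    (sqrt_pos.2 three_pos)).2 (by simpa using integrableOn_Ioi_pow_four_div_one_add_sq_pow_three)
  exact h.const_mul 3

lemma integral_Ioi_sq_mul_radialDirichletDensity :
    ∫ r in Ioi (0 : ℝ), r ^ 2 * radialDirichletDensity r = 3 * √3 * π / 16 := by
  simp_rw [sq_mul_radialDirichletDensity]
  rw [integral_const_mul, integral_comp_mul_left_Ioi (fun t => t ^ 4 / (1 + t ^ 2) ^ 3) 0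
    (by positivity), mul_zero, integral_Ioi_pow_four_div_one_add_sq_pow_three, smul_eq_mul]
  field_simp
  exact (sq_sqrt (by norm_num)).symm

/-- The Dirichlet energy of the ground state: `∫ |∇W|² = 3√3 π²/4`. -/
theorem stmt8 :
    Integrable (fun x : E3 => ‖gradient W x‖ ^ 2) ∧
    ∫ x : E3, ‖gradient W x‖ ^ 2 = 3 * Real.sqrt 3 * Real.pi ^ 2 / 4 := by
  have hdim : Module.finrank ℝ E3 = 3 := finrank_euclideanSpace_fin
  simp_rw [norm_gradient_W_sq]
  refine ⟨(integrable_fun_norm_addHaar volume).2 ?_, ?_⟩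
  · simpa [hdim] using integrableOn_Ioi_sq_mul_radialDirichletDensity
  · rw [integral_fun_norm_addHaar volume radialDirichletDensity, hdim]
    simp only [measureReal_def, EuclideanSpace.volume_ball_fin_three, ENNReal.ofReal_one, one_pow,
      one_mul, Nat.add_one_sub_one, smul_eq_mul, integral_Ioi_sq_mul_radialDirichletDensity,
      nsmul_eq_mul, Nat.cast_ofNat]
    rw [ENNReal.toReal_ofReal (by positivity)]
    ring

end
end

section
/- Let h : ℝ → ℝ be smooth and suppose there exist 0 < R₁ < R₂ such that h'(r) = 0 for r ≤ R₁ and h'(r) = 1 for r ≥ R₂. Define the operator L₁ acting on a spherically symmetric function f by (L₁f)(x) = (2h'(|x|)/|x|)·f(x) + 2h'(|x|)·∂_r f(x) + h''(|x|)·f(x), where ∂_r f(x) = (x/|x|)·∇f(x). Then x ↦ ΛW(x)·(L₁ ΛW)(x) is absolutely integrable on ℝ³ and ∫_{ℝ³} ΛW(x)·(L₁ ΛW)(x) dx = π; in particular the value of the integral does not depend on the choice of h. -/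
open MeasureTheory Real Filter Topology

noncomputable section

/-- The operator `L₁ = 2h'(r)/r + 2h'(r)∂_r + h''(r)` applied to a function `f`,
where `∂_r f(x) = (x/|x|)·∇f(x)`. -/
def L1 (h : ℝ → ℝ) (f : E3 → ℝ) (x : E3) : ℝ :=
  (2 * deriv h ‖x‖ / ‖x‖) * f x
    + 2 * deriv h ‖x‖ * (inner ℝ (‖x‖⁻¹ • x) (gradient f x) : ℝ)
    + deriv (deriv h) ‖x‖ * f x

namespace Stmt10Aux

lemma pos1 {s : ℝ} (hs : 0 ≤ s) : 0 < 1 + 3 * s := by linarith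

lemma hasDerivAt_base (c s : ℝ) (hs : 0 ≤ s) :
    HasDerivAt (fun t : ℝ => (1 + 3 * t) ^ (c : ℝ)) (3 * c * (1 + 3 * s) ^ (c - 1)) s := by
  have h1 : HasDerivAt (fun t : ℝ => 1 + 3 * t) 3 s := by
    simpa using ((hasDerivAt_id s).const_mul 3).const_add 1
  have h2 := (Real.hasDerivAt_rpow_const (x := 1 + 3 * s) (p := c)
    (Or.inl (pos1 hs).ne')).comp s h1
  exact h2.congr_deriv (by ring)

set_option maxHeartbeats 1000000 in
lemma hasGradientAt_W (x : E3) :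
    HasGradientAt W ((-3 * Real.sqrt 3 * (1 + 3 * ‖x‖ ^ 2) ^ (-(3/2) : ℝ)) • x) x := by
  have hn : HasFDerivAt (fun y : E3 => ‖y‖ ^ 2) (2 • (innerSL ℝ x)) x :=
    (hasStrictFDerivAt_norm_sq x).hasFDerivAt
  have hg : HasDerivAt (fun s : ℝ => Real.sqrt 3 * (1 + 3 * s) ^ (-(1/2) : ℝ))
      (Real.sqrt 3 * (3 * (-(1/2)) * (1 + 3 * ‖x‖^2) ^ ((-(1/2) : ℝ) - 1))) (‖x‖^2) :=
    (hasDerivAt_base _ _ (by positivity)).const_mul _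
  have hF := hg.comp_hasFDerivAt x hn
  rw [hasGradientAt_iff_hasFDerivAt]
  have hWeq : W = (fun s : ℝ => Real.sqrt 3 * (1 + 3 * s) ^ (-(1/2) : ℝ)) ∘
      (fun y : E3 => ‖y‖ ^ 2) := rfl
  rw [hWeq]
  refine hF.congr_fderiv ?_
  ext y
  simp only [InnerProductSpace.toDual_apply_apply, ContinuousLinearMap.smul_apply,
    ContinuousLinearMap.coe_smul', Pi.smul_apply, innerSL_apply_apply, real_inner_smul_left,
    smul_eq_mul]
  have : ((-(1/2) : ℝ) - 1) = (-(3/2) : ℝ) := by norm_num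
  rw [this]
  ring

def G (s : ℝ) : ℝ := Real.sqrt 3 / 2 * (1 - 3 * s) * (1 + 3 * s) ^ (-(3/2) : ℝ)
def Gp (s : ℝ) : ℝ := 3 * Real.sqrt 3 / 2 * (3 * s - 5) * (1 + 3 * s) ^ (-(5/2) : ℝ)
def psi (r : ℝ) : ℝ := r ^ 2 * G (r ^ 2) ^ 2
def psi' (r : ℝ) : ℝ := 3 * r * (1 - 3 * r^2) * (1 - 15 * r^2) / (2 * (1 + 3 * r^2)^4)

lemma lamW_eq (x : E3) : LamW x = G (‖x‖ ^ 2) := by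
  have hg := (hasGradientAt_W x).gradient
  rw [LamW, hg, W, G, real_inner_smul_right, real_inner_self_eq_norm_sq]
  have hp : (0:ℝ) < 1 + 3 * ‖x‖ ^ 2 := pos1 (by positivity)
  have key : (1 + 3 * ‖x‖ ^ 2) ^ (-(1/2) : ℝ)
      = (1 + 3 * ‖x‖ ^ 2) * (1 + 3 * ‖x‖ ^ 2) ^ (-(3/2) : ℝ) := by
    rw [← Real.rpow_one_add' hp.le (by norm_num)]
    norm_num
  rw [key]; ring

lemma hasDerivAt_G (s : ℝ) (hs : 0 ≤ s) : HasDerivAt G (Gp s / 2) s := by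
  have h1 : HasDerivAt (fun t : ℝ => Real.sqrt 3 / 2 * (1 - 3 * t))
      (-(Real.sqrt 3 / 2 * 3)) s := by
    simpa using (((hasDerivAt_id s).const_mul 3).const_sub 1).const_mul (Real.sqrt 3 / 2)
  have h2 := hasDerivAt_base (-(3/2)) s hs
  have := h1.mul h2
  refine this.congr_deriv ?_
  have hp : (0:ℝ) < 1 + 3 * s := pos1 hs
  have key : (1 + 3 * s) ^ (-(3/2) : ℝ)
      = (1 + 3 * s) * (1 + 3 * s) ^ (-(5/2) : ℝ) := by
    rw [← Real.rpow_one_add' hp.le (by norm_num)]; norm_num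
  have e2 : ((-(3/2) : ℝ) - 1) = (-(5/2) : ℝ) := by norm_num
  rw [e2, Gp, key]; ring

set_option maxHeartbeats 1000000 in
lemma hasGradientAt_LamW (x : E3) : HasGradientAt LamW (Gp (‖x‖ ^ 2) • x) x := by
  have hLeq : LamW = fun y : E3 => G (‖y‖ ^ 2) := funext fun y => lamW_eq y
  rw [hLeq, hasGradientAt_iff_hasFDerivAt]
  change HasFDerivAt (G ∘ fun y : E3 => ‖y‖ ^ 2) _ x
  have hn : HasFDerivAt (fun y : E3 => ‖y‖ ^ 2) (2 • (innerSL ℝ x)) x :=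
    (hasStrictFDerivAt_norm_sq x).hasFDerivAt
  have hF := (hasDerivAt_G (‖x‖ ^ 2) (by positivity)).comp_hasFDerivAt x hn
  refine hF.congr_fderiv ?_
  ext y
  simp only [InnerProductSpace.toDual_apply_apply, ContinuousLinearMap.smul_apply,
    ContinuousLinearMap.coe_smul', Pi.smul_apply, innerSL_apply_apply, real_inner_smul_left,
    smul_eq_mul]
  ring

lemma gradient_LamW (x : E3) : gradient LamW x = Gp (‖x‖ ^ 2) • x :=
  (hasGradientAt_LamW x).gradient

lemma rpow_npow_neg {t : ℝ} (ht : 0 < t) (n : ℕ) : t ^ (-(n:ℝ)) = (t ^ n)⁻¹ := by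
  rw [Real.rpow_neg ht.le, Real.rpow_natCast]

lemma Gsq (s : ℝ) (hs : 0 ≤ s) : G s ^ 2 = 3 * (1 - 3*s)^2 / (4 * (1 + 3*s)^3) := by
  have hp := pos1 hs
  rw [G, mul_pow, mul_pow, ← Real.rpow_natCast ((1+3*s) ^ (-(3/2):ℝ)) 2,
    ← Real.rpow_mul hp.le]
  norm_num
  rw [div_pow,
    Real.sq_sqrt (by norm_num : (0:ℝ) ≤ 3)]
  field_simp
  try ring
  try tauto

lemma GGp (s : ℝ) (hs : 0 ≤ s) :
    G s * Gp s = 9 * (1 - 3*s) * (3*s - 5) / (4 * (1 + 3*s)^4) := by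
  have hp := pos1 hs
  rw [G, Gp]
  have : (1+3*s) ^ (-(3/2):ℝ) * (1+3*s) ^ (-(5/2):ℝ) = (1+3*s) ^ (-(4:ℝ)) := by
    rw [← Real.rpow_add hp]; norm_num
  calc Real.sqrt 3 / 2 * (1 - 3 * s) * (1 + 3 * s) ^ (-(3/2) : ℝ) *
        (3 * Real.sqrt 3 / 2 * (3 * s - 5) * (1 + 3 * s) ^ (-(5/2) : ℝ))
      = (Real.sqrt 3 * Real.sqrt 3) * (3/4) * (1-3*s) * (3*s-5) *
        ((1+3*s) ^ (-(3/2):ℝ) * (1+3*s) ^ (-(5/2):ℝ)) := by ring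
    _ = 9 * (1 - 3*s) * (3*s - 5) / (4 * (1 + 3*s)^4) := by
        rw [this, Real.mul_self_sqrt (by norm_num : (0:ℝ) ≤ 3)]
        rw [show (-(4:ℝ)) = -((4:ℕ):ℝ) by norm_num, rpow_npow_neg hp 4]
        field_simp
        try ring
        try tauto

lemma psi_eq (r : ℝ) : psi r = 3 * r^2 * (1 - 3*r^2)^2 / (4 * (1 + 3*r^2)^3) := by
  rw [psi, Gsq _ (sq_nonneg r)]; ring

lemma hasDerivAt_psi (r : ℝ) : HasDerivAt psi (psi' r) r := by
  have hpeq : psi = fun r => 3 * r^2 * (1 - 3*r^2)^2 / (4 * (1 + 3*r^2)^3) :=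
    funext psi_eq
  rw [hpeq]
  have hp : (0:ℝ) < 1 + 3 * r^2 := pos1 (sq_nonneg r)
  have hnum : HasDerivAt (fun r : ℝ => 3 * r^2 * (1 - 3*r^2)^2)
      (3 * (2*r) * (1-3*r^2)^2 + 3*r^2 * (2 * (1-3*r^2) * (-(3*(2*r))))) r := by
    have h1 : HasDerivAt (fun r : ℝ => 3 * r^2) (3 * (2*r)) r := by
      simpa using (hasDerivAt_pow 2 r).const_mul 3
    have h2 : HasDerivAt (fun r : ℝ => (1 - 3*r^2)^2) (2 * (1-3*r^2) * (-(3*(2*r)))) r := by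
      have h3 : HasDerivAt (fun r : ℝ => 1 - 3*r^2) (-(3*(2*r))) r := by
        simpa using ((hasDerivAt_pow 2 r).const_mul 3).const_sub 1
      simpa using h3.fun_pow 2
    exact h1.mul h2
  have hden : HasDerivAt (fun r : ℝ => 4 * (1 + 3*r^2)^3)
      (4 * (3 * (1+3*r^2)^2 * (3*(2*r)))) r := by
    have h3 : HasDerivAt (fun r : ℝ => 1 + 3*r^2) (3*(2*r)) r := by
      simpa using ((hasDerivAt_pow 2 r).const_mul 3).const_add 1
    simpa [mul_comm, mul_assoc, mul_left_comm] using (h3.pow 3).const_mul 4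
  have := hnum.div hden (by positivity)
  refine this.congr_deriv ?_
  rw [psi']
  field_simp
  ring

lemma key_ident (r : ℝ) :
    2 * r * G (r^2)^2 + 2 * r^3 * (G (r^2) * Gp (r^2)) = psi' r := by
  rw [Gsq _ (sq_nonneg r), GGp _ (sq_nonneg r), psi']
  have hp : (0:ℝ) < 1 + 3 * r^2 := pos1 (sq_nonneg r)
  field_simp
  ring

lemma psi'_bound {r : ℝ} (hr : 0 < r) : |psi' r| ≤ 5 / (6 * r^3) := by
  have hp : (0:ℝ) < 1 + 3 * r^2 := pos1 (sq_nonneg r)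
  rw [abs_le, psi']
  constructor
  · rw [show -(5 / (6 * r^3)) = (-5) / (6 * r^3) by ring,
      div_le_div_iff₀ (by positivity) (by positivity)]
    nlinarith [sq_nonneg r, sq_nonneg (r^2), sq_nonneg (r^3), sq_nonneg (r^4), hr.le]
  · rw [div_le_div_iff₀ (by positivity) (by positivity)]
    nlinarith [sq_nonneg r, sq_nonneg (r^2), sq_nonneg (r^3), sq_nonneg (r^4), hr.le]

lemma tendsto_psi : Tendsto psi atTop (𝓝 (1/4 : ℝ)) := by
  have hcont : ContinuousAt (fun u : ℝ => 3 * (u^2 - 3)^2 / (4 * (u^2 + 3)^3)) 0 := by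
    apply ContinuousAt.div (by fun_prop) (by fun_prop)
    norm_num
  have hcomp := hcont.tendsto.comp tendsto_inv_atTop_zero
  norm_num at hcomp
  apply hcomp.congr'
  filter_upwards [eventually_ge_atTop (1:ℝ)] with r hr
  have hr0 : (0:ℝ) < r := lt_of_lt_of_le one_pos hr
  have hp : (0:ℝ) < 1 + 3 * r^2 := pos1 (sq_nonneg r)
  rw [Function.comp_apply, psi_eq]
  field_simp

lemma vol_ball_E3 : (volume (Metric.ball (0:E3) 1)).toReal = 4 * π / 3 := by
  rw [EuclideanSpace.volume_ball]
  have hcard : Fintype.card (Fin 3) = 3 := by simp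
  rw [hcard]
  have hG : Real.Gamma ((3:ℕ) / 2 + 1) = 3/4 * Real.sqrt π := by
    have h1 : ((3:ℕ):ℝ) / 2 + 1 = 3/2 + 1 := by norm_num
    rw [h1, Real.Gamma_add_one (by norm_num)]
    have h2 : (3/2 : ℝ) = 1/2 + 1 := by norm_num
    rw [h2, Real.Gamma_add_one (by norm_num), Real.Gamma_one_half_eq]
    ring
  rw [hG]
  have hs : Real.sqrt π ^ 3 / (3/4 * Real.sqrt π) = 4 * π / 3 := by
    have h3 : Real.sqrt π ^ 3 = π * Real.sqrt π := by
      rw [pow_succ, Real.sq_sqrt Real.pi_nonneg]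
    rw [h3, div_eq_iff (by positivity)]
    ring
  rw [hs]
  simp [ENNReal.toReal_ofReal, Real.pi_nonneg]
  positivity

/-- The radial form of the integrand. -/
def Qf (dh ddh : ℝ → ℝ) (r : ℝ) : ℝ :=
  G (r^2) * (2 * dh r / r * G (r^2)
    + 2 * dh r * (r⁻¹ * (Gp (r^2) * r^2)) + ddh r * G (r^2))

/-- The derivative of `dh · psi`. -/
def cf (dh ddh : ℝ → ℝ) (r : ℝ) : ℝ := ddh r * psi r + dh r * psi' r

lemma Qf_c (dh ddh : ℝ → ℝ) {r : ℝ} (hr : 0 < r) :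
    r^2 * Qf dh ddh r = cf dh ddh r := by
  have ki := key_ident r
  rw [Qf, cf, ← ki, psi]
  field_simp
  ring

lemma Qf_tail (dh ddh : ℝ → ℝ) {r : ℝ} (hr : 0 < r) (h1 : dh r = 1) (h0 : ddh r = 0) :
    Qf dh ddh r = psi' r / r^2 := by
  have := Qf_c dh ddh hr
  rw [cf, h1, h0] at this
  rw [eq_div_iff (by positivity : (r:ℝ)^2 ≠ 0)]
  linarith [this]

end Stmt10Aux

open Stmt10Aux

/-- For any smooth `h` with `h' = 0` on `r ≤ R₁` and `h' = 1` on `r ≥ R₂`,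
`ΛW · L₁ΛW` is integrable on ℝ³ and `∫ ΛW L₁ΛW = π`; in particular the integral
does not depend on the choice of `h`. -/
theorem stmt10 (h : ℝ → ℝ) (hh : ContDiff ℝ (⊤ : ℕ∞) h) (R₁ R₂ : ℝ)
    (hR₁ : 0 < R₁) (hR₁₂ : R₁ < R₂)
    (hflat : ∀ r : ℝ, r ≤ R₁ → deriv h r = 0)
    (hone : ∀ r : ℝ, R₂ ≤ r → deriv h r = 1) :
    Integrable (fun x : E3 => LamW x * L1 h LamW x) ∧
    ∫ x : E3, LamW x * L1 h LamW x = Real.pi := by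
  classical
  -- basic facts about h
  have hh' : ContDiff ℝ ((⊤:ℕ∞):WithTop ℕ∞) h := hh.of_le (by simp)
  have hd1 : ContDiff ℝ ((⊤:ℕ∞):WithTop ℕ∞) (deriv h) := (contDiff_infty_iff_deriv.mp hh').2
  have cont_dh : Continuous (deriv h) := hd1.continuous
  have hasD2 : ∀ r : ℝ, HasDerivAt (deriv h) (deriv (deriv h) r) r :=
    fun r => ((contDiff_infty_iff_deriv.mp hd1).1 r).hasDerivAt
  have cont_ddh : Continuous (deriv (deriv h)) := (contDiff_infty_iff_deriv.mp hd1).2.continuous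
  have hflat' : ∀ r : ℝ, r < R₁ → deriv (deriv h) r = 0 := by
    intro r hr
    have hev : deriv h =ᶠ[𝓝 r] fun _ => 0 :=
      Filter.eventuallyEq_of_mem (Iio_mem_nhds hr) (fun y hy => hflat y (le_of_lt hy))
    rw [hev.deriv_eq, deriv_const]
  have hflatR₁ : deriv (deriv h) R₁ = 0 := by
    have h1 : Tendsto (deriv (deriv h)) (𝓝[<] R₁) (𝓝 (deriv (deriv h) R₁)) :=
      (cont_ddh.continuousAt).continuousWithinAt
    have h2 : Tendsto (deriv (deriv h)) (𝓝[<] R₁) (𝓝 0) := by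
      apply Tendsto.congr' _ tendsto_const_nhds
      filter_upwards [self_mem_nhdsWithin] with y hy
      exact (hflat' y hy).symm
    exact tendsto_nhds_unique h1 h2
  have hone' : ∀ r : ℝ, R₂ < r → deriv (deriv h) r = 0 := by
    intro r hr
    have hev : deriv h =ᶠ[𝓝 r] fun _ => 1 :=
      Filter.eventuallyEq_of_mem (Ioi_mem_nhds hr) (fun y hy => hone y (le_of_lt hy))
    rw [hev.deriv_eq, deriv_const]
  -- the integrand as a function of the radius
  have hFQ : ∀ x : E3, LamW x * L1 h LamW x = Qf (deriv h) (deriv (deriv h)) ‖x‖ := by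
    intro x
    rw [L1, gradient_LamW, lamW_eq, real_inner_smul_left, real_inner_smul_right,
      real_inner_self_eq_norm_sq, Qf]
    try ring
  have hFeq : (fun x : E3 => LamW x * L1 h LamW x)
      = fun x : E3 => Qf (deriv h) (deriv (deriv h)) ‖x‖ := funext hFQ
  set Q : ℝ → ℝ := Qf (deriv h) (deriv (deriv h)) with hQdef
  set c : ℝ → ℝ := cf (deriv h) (deriv (deriv h)) with hcdef
  have hphi : ∀ r : ℝ, HasDerivAt (fun t => deriv h t * psi t) (c r) r := by
    intro r
    have h0 := (hasD2 r).mul (hasDerivAt_psi r)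
    exact h0
  have cont_psi : Continuous psi :=
    continuous_iff_continuousAt.mpr fun r => (hasDerivAt_psi r).continuousAt
  have cont_psi' : Continuous psi' := by
    apply Continuous.div (by fun_prop) (by fun_prop)
    intro r
    have := pos1 (sq_nonneg r)
    positivity
  have cont_c : Continuous c := by
    rw [hcdef]
    have : cf (deriv h) (deriv (deriv h)) =
        fun r => deriv (deriv h) r * psi r + deriv h r * psi' r := rfl
    rw [this]
    exact (cont_ddh.mul cont_psi).add (cont_dh.mul cont_psi')
  have hR₂0 : (0:ℝ) < R₂ := hR₁.trans hR₁₂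
  -- integrability of c on (R₂, ∞)
  have hmaj : IntegrableOn (fun t : ℝ => 5/6 * t ^ (-(3:ℝ))) (Set.Ioi R₂) :=
    (integrableOn_Ioi_rpow_of_lt (by norm_num) hR₂0).const_mul _
  have hint_psi' : IntegrableOn psi' (Set.Ioi R₂) := by
    apply Integrable.mono' hmaj cont_psi'.aestronglyMeasurable.restrict
    rw [ae_restrict_iff' measurableSet_Ioi]
    apply ae_of_all
    intro t ht
    have ht0 : (0:ℝ) < t := hR₂0.trans ht
    have he : (5:ℝ)/6 * t ^ (-(3:ℝ)) = 5 / (6 * t^3) := by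
      rw [show (-(3:ℝ)) = -((3:ℕ):ℝ) by norm_num, rpow_npow_neg ht0 3]
      ring
    rw [Real.norm_eq_abs, he]
    exact psi'_bound ht0
  have hceq₂ : Set.EqOn psi' c (Set.Ioi R₂) := by
    intro t ht
    show psi' t = cf (deriv h) (deriv (deriv h)) t
    simp only [cf]
    rw [hone t (le_of_lt ht), hone' t ht]
    ring
  have hint_c_Ioi₂ : IntegrableOn c (Set.Ioi R₂) :=
    hint_psi'.congr_fun hceq₂ measurableSet_Ioi
  have hint_c : IntegrableOn c (Set.Ioi R₁) := by
    rw [← Set.Ioc_union_Ioi_eq_Ioi hR₁₂.le]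
    exact (cont_c.integrableOn_Ioc).union hint_c_Ioi₂
  have htend : Tendsto (fun r => deriv h r * psi r) atTop (𝓝 (1/4 : ℝ)) := by
    apply Tendsto.congr' _ tendsto_psi
    filter_upwards [eventually_ge_atTop R₂] with r hr
    rw [hone r hr, one_mul]
  have hIoiR₁ : ∫ r in Set.Ioi R₁, c r = 1/4 := by
    have := integral_Ioi_of_hasDerivAt_of_tendsto
      ((cont_dh.mul cont_psi).continuousWithinAt) (fun r _ => hphi r) hint_c htend
    rw [this, Pi.mul_apply, hflat R₁ le_rfl]
    ring
  have hczero : ∀ r ∈ Set.Ioc 0 R₁, c r = 0 := by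
    intro r hr
    show cf (deriv h) (deriv (deriv h)) r = 0
    simp only [cf]
    rcases eq_or_lt_of_le hr.2 with heq | hlt
    · rw [heq, hflatR₁, hflat R₁ le_rfl]; ring
    · rw [hflat' r hlt, hflat r hlt.le]; ring
  have hIoc0 : ∫ r in Set.Ioc 0 R₁, c r = 0 := by
    rw [setIntegral_congr_fun measurableSet_Ioc hczero]
    simp
  have hIoi0 : ∫ r in Set.Ioi (0:ℝ), c r = 1/4 := by
    rw [← Set.Ioc_union_Ioi_eq_Ioi hR₁.le,
      setIntegral_union (Set.Ioc_disjoint_Ioi le_rfl) measurableSet_Ioi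
        cont_c.integrableOn_Ioc hint_c, hIoc0, hIoiR₁]
    ring
  have dimE : Module.finrank ℝ E3 = 3 := finrank_euclideanSpace_fin
  -- the value of the integral
  have hmain : ∫ x : E3, LamW x * L1 h LamW x = π := by
    rw [hFeq]
    rw [MeasureTheory.integral_fun_norm_addHaar (volume : Measure E3) Q]
    rw [dimE, measureReal_def, vol_ball_E3]
    have hinner : ∫ y in Set.Ioi (0:ℝ), y ^ (3-1) • Q y = 1/4 := by
      rw [← hIoi0]
      apply setIntegral_congr_fun measurableSet_Ioi
      intro y hy
      show y ^ (3-1) • Q y = c y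
      rw [smul_eq_mul, show (3-1 : ℕ) = 2 from rfl]
      exact Qf_c (deriv h) (deriv (deriv h)) hy
    rw [hinner]
    simp only [smul_eq_mul, nsmul_eq_mul]
    norm_num
    ring
  refine ⟨?_, hmain⟩
  -- integrability
  have hQ0 : ∀ r : ℝ, r < R₁ → Q r = 0 := by
    intro r hr
    show Qf (deriv h) (deriv (deriv h)) r = 0
    simp only [Qf]
    rw [hflat r hr.le, hflat' r hr]
    ring
  have contG2 : Continuous fun r : ℝ => G (r^2) := by
    rw [continuous_iff_continuousAt]
    intro r
    have hcb : ContinuousAt (fun r : ℝ => 1 + 3 * r^2) r := by fun_prop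
    have hrp : ContinuousAt (fun r : ℝ => (1 + 3 * r^2) ^ (-(3/2) : ℝ)) r :=
      hcb.rpow_const (Or.inl (pos1 (sq_nonneg r)).ne')
    have : ContinuousAt (fun r : ℝ =>
        Real.sqrt 3 / 2 * (1 - 3 * r^2) * (1 + 3 * r^2) ^ (-(3/2) : ℝ)) r :=
      (ContinuousAt.mul (by fun_prop) hrp)
    exact this
  have contGp2 : Continuous fun r : ℝ => Gp (r^2) := by
    rw [continuous_iff_continuousAt]
    intro r
    have hcb : ContinuousAt (fun r : ℝ => 1 + 3 * r^2) r := by fun_prop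
    have hrp : ContinuousAt (fun r : ℝ => (1 + 3 * r^2) ^ (-(5/2) : ℝ)) r :=
      hcb.rpow_const (Or.inl (pos1 (sq_nonneg r)).ne')
    have : ContinuousAt (fun r : ℝ =>
        3 * Real.sqrt 3 / 2 * (3 * r^2 - 5) * (1 + 3 * r^2) ^ (-(5/2) : ℝ)) r :=
      (ContinuousAt.mul (by fun_prop) hrp)
    exact this
  have hcontF : Continuous fun x : E3 => Q ‖x‖ := by
    rw [continuous_iff_continuousAt]
    intro x
    rcases lt_or_ge ‖x‖ R₁ with hx | hx
    · have hopen : IsOpen {y : E3 | ‖y‖ < R₁} := isOpen_lt continuous_norm continuous_const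
      have hev : (fun y : E3 => Q ‖y‖) =ᶠ[𝓝 x] fun _ => (0:ℝ) := by
        filter_upwards [hopen.mem_nhds hx] with y hy
        exact hQ0 _ hy
      exact (continuousAt_congr hev).mpr continuousAt_const
    · have hx0 : (0:ℝ) < ‖x‖ := lt_of_lt_of_le hR₁ hx
      have hQc : ContinuousAt Q ‖x‖ := by
        have hG : ContinuousAt (fun r : ℝ => G (r^2)) ‖x‖ := contG2.continuousAt
        have hGp : ContinuousAt (fun r : ℝ => Gp (r^2)) ‖x‖ := contGp2.continuousAt
        show ContinuousAt (fun r : ℝ => G (r^2) * (2 * deriv h r / r * G (r^2)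
          + 2 * deriv h r * (r⁻¹ * (Gp (r^2) * r^2)) + deriv (deriv h) r * G (r^2))) ‖x‖
        apply ContinuousAt.mul hG
        apply ContinuousAt.add
        apply ContinuousAt.add
        · exact ((cont_dh.continuousAt.const_mul 2).div continuousAt_id hx0.ne').mul hG
        · exact (cont_dh.continuousAt.const_mul 2).mul
            ((continuousAt_id.inv₀ hx0.ne').mul (hGp.mul (by fun_prop)))
        · exact cont_ddh.continuousAt.mul hG
      exact hQc.comp continuous_norm.continuousAt
  set T : ℝ := max R₂ 1 with hT
  obtain ⟨M, hM⟩ := (isCompact_closedBall (0:E3) T).exists_bound_of_continuousOn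
    hcontF.continuousOn
  have hT0 : (0:ℝ) < T := lt_of_lt_of_le one_pos (le_max_right _ _)
  have hM0 : 0 ≤ M :=
    le_trans (norm_nonneg _) (hM 0 (Metric.mem_closedBall_self hT0.le))
  set C : ℝ := max (M * (1+T)^4) (40/3 : ℝ) with hC
  have hC40 : (40:ℝ)/3 ≤ C := le_max_right _ _
  have hbound : ∀ x : E3, ‖Q ‖x‖‖ ≤ C * (1 + ‖x‖) ^ (-(4:ℝ)) := by
    intro x
    have h1x : (0:ℝ) < 1 + ‖x‖ := by positivity
    rw [show (-(4:ℝ)) = -((4:ℕ):ℝ) by norm_num, rpow_npow_neg h1x 4]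
    rcases le_or_gt ‖x‖ T with hxT | hxT
    · have hMx : ‖Q ‖x‖‖ ≤ M := hM x (by simpa [Metric.mem_closedBall, dist_zero_right] using hxT)
      have hpow : (1+‖x‖)^4 ≤ (1+T)^4 :=
        pow_le_pow_left₀ (by positivity) (by linarith) 4
      have hCM : M * (1+T)^4 ≤ C := le_max_left _ _
      rw [le_mul_inv_iff₀ (by positivity)]
      calc ‖Q ‖x‖‖ * (1+‖x‖)^4 ≤ M * (1+‖x‖)^4 := by
            apply mul_le_mul_of_nonneg_right hMx (by positivity)
        _ ≤ M * (1+T)^4 := by apply mul_le_mul_of_nonneg_left hpow hM0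
        _ ≤ C := hCM
    · have hr2 : R₂ < ‖x‖ := lt_of_le_of_lt (le_max_left _ _) hxT
      have hr1 : (1:ℝ) ≤ ‖x‖ := le_trans (le_max_right _ _) hxT.le
      have hr0 : (0:ℝ) < ‖x‖ := lt_of_lt_of_le one_pos hr1
      have hQr : Q ‖x‖ = psi' ‖x‖ / ‖x‖^2 :=
        Qf_tail _ _ hr0 (hone _ hr2.le) (hone' _ hr2)
      rw [hQr, Real.norm_eq_abs, abs_div, abs_of_pos (by positivity : (0:ℝ) < ‖x‖^2)]
      have hb := psi'_bound hr0
      calc |psi' ‖x‖| / ‖x‖^2 ≤ (5/(6*‖x‖^3)) / ‖x‖^2 := by gcongr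
        _ = 5 / (6 * ‖x‖^3 * ‖x‖^2) := by rw [div_div]
        _ ≤ C * ((1+‖x‖)^4)⁻¹ := by
            rw [← div_eq_mul_inv, div_le_div_iff₀ (by positivity) (by positivity)]
            nlinarith [pow_le_pow_left₀ (by positivity : (0:ℝ) ≤ 1 + ‖x‖)
                (by linarith : (1:ℝ) + ‖x‖ ≤ 2*‖x‖) 4,
              pow_le_pow_right₀ hr1 (show (4:ℕ) ≤ 5 by norm_num),
              pow_pos hr0 5, pow_pos hr0 4, mul_le_mul_of_nonneg_right hC40
                (le_of_lt (pow_pos hr0 5))]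
    
  rw [hFeq]
  have hfr : ((Module.finrank ℝ E3 : ℝ)) < 4 := by rw [dimE]; norm_num
  exact Integrable.mono' ((integrable_one_add_norm hfr).const_mul C)
    hcontF.aestronglyMeasurable (ae_of_all _ hbound)

end
end
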